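/- Let Y = Gr(2,5) ∩ {p_{12} = p_{03}} ∩ {p_{13} = p_{24}} ⊂ P^9. Then there is exactly one plane Π ⊂ P^4 whose dual plane Π^∨ (the set of all lines contained in Π) is contained in Y, namely Π = {x_2 = x_3 = 0}. -/
import Mathlib


/-- The skew form corresponding to `p₁₂ - p₀₃`. -/
def Om (a b : Fin 5 → ℂ) : ℂ :=
  (a 1 * b 2 - a 2 * b 1) - (a 0 * b 3 - a 3 * b 0)

/-- The skew form corresponding to `p₁₃ - p₂₄`. -/
def Om' (a b : Fin 5 → ℂ) : ℂ :=
  (a 1 * b 3 - a 3 * b 1) - (a 2 * b 4 - a 4 * b 2)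

/-- Total isotropy of a subspace. -/
def IsIsotropic (f : (Fin 5 → ℂ) → (Fin 5 → ℂ) → ℂ) (W : Submodule ℂ (Fin 5 → ℂ)) : Prop :=
  ∀ a ∈ W, ∀ b ∈ W, f a b = 0


open Module LinearMap.BilinForm

noncomputable def Bm : LinearMap.BilinForm ℂ (Fin 5 → ℂ) :=
  LinearMap.mk₂ ℂ Om (by intros; simp [Om]; ring) (by intros; simp [Om]; ring)
    (by intros; simp [Om]; ring) (by intros; simp [Om]; ring)

noncomputable def Bm' : LinearMap.BilinForm ℂ (Fin 5 → ℂ) :=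
  LinearMap.mk₂ ℂ Om' (by intros; simp [Om']; ring) (by intros; simp [Om']; ring)
    (by intros; simp [Om']; ring) (by intros; simp [Om']; ring)

@[simp] lemma Bm_apply (a b : Fin 5 → ℂ) : Bm a b = Om a b := rfl
@[simp] lemma Bm'_apply (a b : Fin 5 → ℂ) : Bm' a b = Om' a b := rfl

lemma Bm_refl : Bm.IsRefl := by
  intro x y h
  have : Om y x = -Om x y := by simp [Om]; ring
  simp_all

lemma Bm'_refl : Bm'.IsRefl := by
  intro x y h
  have : Om' y x = -Om' x y := by simp [Om']; ring
  simp_all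

lemma rad_mem {B : LinearMap.BilinForm ℂ (Fin 5 → ℂ)} (hr : B.IsRefl)
    {W : Submodule ℂ (Fin 5 → ℂ)} (h3 : finrank ℂ W = 3)
    (hiso : W ≤ B.orthogonal W) :
    ∃ x, x ≠ 0 ∧ x ∈ W ∧ x ∈ B.orthogonal ⊤ := by
  have h := LinearMap.BilinForm.finrank_add_finrank_orthogonal hr W
  have h5 : finrank ℂ (Fin 5 → ℂ) = 5 := by simp
  have hle : finrank ℂ W ≤ finrank ℂ (B.orthogonal W) := Submodule.finrank_mono hiso
  have hpos : 0 < finrank ℂ (W ⊓ B.orthogonal ⊤ : Submodule ℂ (Fin 5 → ℂ)) := by omega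
  have hne : (W ⊓ B.orthogonal ⊤ : Submodule ℂ (Fin 5 → ℂ)) ≠ ⊥ := by
    intro hb; rw [hb, finrank_bot] at hpos; omega
  obtain ⟨x, hx, hx0⟩ := Submodule.exists_mem_ne_zero_of_ne_bot hne
  exact ⟨x, hx0, hx.1, hx.2⟩

lemma Bm_rad {x : Fin 5 → ℂ} (hx : x ∈ Bm.orthogonal ⊤) :
    x 0 = 0 ∧ x 1 = 0 ∧ x 2 = 0 ∧ x 3 = 0 := by
  rw [LinearMap.BilinForm.mem_orthogonal_iff] at hx
  have h0 := hx (Pi.single 3 1) Submodule.mem_top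
  have h1 := hx (Pi.single 2 1) Submodule.mem_top
  have h2 := hx (Pi.single 1 1) Submodule.mem_top
  have h3 := hx (Pi.single 0 1) Submodule.mem_top
  simp [LinearMap.BilinForm.IsOrtho, Om, Pi.single_apply] at h0 h1 h2 h3
  tauto

lemma Bm'_rad {x : Fin 5 → ℂ} (hx : x ∈ Bm'.orthogonal ⊤) :
    x 1 = 0 ∧ x 2 = 0 ∧ x 3 = 0 ∧ x 4 = 0 := by
  rw [LinearMap.BilinForm.mem_orthogonal_iff] at hx
  have h0 := hx (Pi.single 3 1) Submodule.mem_top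
  have h1 := hx (Pi.single 4 1) Submodule.mem_top
  have h2 := hx (Pi.single 1 1) Submodule.mem_top
  have h3 := hx (Pi.single 2 1) Submodule.mem_top
  simp [LinearMap.BilinForm.IsOrtho, Om', Pi.single_apply] at h0 h1 h2 h3
  tauto

noncomputable def Kc : Submodule ℂ (Fin 5 → ℂ) where
  carrier := {v | v 2 = 0 ∧ v 3 = 0}
  add_mem' := by rintro a b ⟨ha2, ha3⟩ ⟨hb2, hb3⟩; simp [ha2, ha3, hb2, hb3]
  zero_mem' := by simp
  smul_mem' := by rintro c a ⟨ha2, ha3⟩; simp [ha2, ha3]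

lemma span_eq_Kc :
    Submodule.span ℂ {Pi.single 0 1, Pi.single 1 1, Pi.single 4 1} = Kc := by
  apply le_antisymm
  · rw [Submodule.span_le]
    rintro v (rfl | rfl | rfl) <;>
      exact ⟨by simp [Pi.single_apply], by simp [Pi.single_apply]⟩
  · rintro v ⟨h2, h3⟩
    have : v = v 0 • (Pi.single 0 1 : Fin 5 → ℂ) + v 1 • (Pi.single 1 1 : Fin 5 → ℂ) + v 4 • (Pi.single 4 1 : Fin 5 → ℂ) := by
      funext i
      fin_cases i <;> simp [Pi.single_apply, h2, h3]
    rw [this]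
    refine Submodule.add_mem _ (Submodule.add_mem _ ?_ ?_) ?_ <;>
      exact Submodule.smul_mem _ _ (Submodule.subset_span (by simp))

lemma li014 : LinearIndependent ℂ ![(Pi.single 0 1 : Fin 5 → ℂ), Pi.single 1 1, Pi.single 4 1] := by
  have hb := (Pi.basisFun ℂ (Fin 5)).linearIndependent
  have hinj : Function.Injective (![0, 1, 4] : Fin 3 → Fin 5) := by decide
  have := hb.comp ![0, 1, 4] hinj
  convert this using 1
  funext j
  fin_cases j <;> simp

lemma finrank_span014 :
    Module.finrank ℂ (Submodule.span ℂ {Pi.single 0 1, Pi.single 1 1, (Pi.single 4 1 : Fin 5 → ℂ)}) = 3 := by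
  have h := finrank_span_eq_card li014
  have hr : Set.range ![(Pi.single 0 1 : Fin 5 → ℂ), Pi.single 1 1, Pi.single 4 1]
      = {Pi.single 0 1, Pi.single 1 1, Pi.single 4 1} := by
    ext v
    constructor
    · rintro ⟨j, rfl⟩
      fin_cases j <;> simp
    · rintro (rfl | rfl | rfl)
      exacts [⟨0, rfl⟩, ⟨1, rfl⟩, ⟨2, rfl⟩]
  rw [hr] at h
  simpa using h

lemma mem_Kc {v : Fin 5 → ℂ} : v ∈ Kc ↔ v 2 = 0 ∧ v 3 = 0 := Iff.rfl

/-- For `Y = Gr(2,5) ∩ {p₁₂ = p₀₃} ∩ {p₁₃ = p₂₄}`, there is exactly one plane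
`Π ⊂ ℙ⁴` whose dual plane `Π^∨` (all lines in `Π`) is contained in `Y`, namely
`Π = {x₂ = x₃ = 0} = P(⟨e₀, e₁, e₄⟩)`: a 3-space `V₃` has all its 2-dimensional
subspaces satisfying both Plücker relations (i.e. `V₃` is totally isotropic for both
forms) iff `V₃ = ⟨e₀, e₁, e₄⟩`. -/
theorem stmt15 :
    {V₃ : Submodule ℂ (Fin 5 → ℂ) | Module.finrank ℂ V₃ = 3 ∧
        IsIsotropic Om V₃ ∧ IsIsotropic Om' V₃}
      = {Submodule.span ℂ {Pi.single 0 1, Pi.single 1 1, Pi.single 4 1}} := by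
  ext W
  simp only [Set.mem_setOf_eq, Set.mem_singleton_iff]
  constructor
  · rintro ⟨h3, hOm, hOm'⟩
    have hW : W ≤ Bm.orthogonal W := by
      intro b hb
      rw [LinearMap.BilinForm.mem_orthogonal_iff]
      intro m hm
      exact hOm m hm b hb
    have hW' : W ≤ Bm'.orthogonal W := by
      intro b hb
      rw [LinearMap.BilinForm.mem_orthogonal_iff]
      intro m hm
      exact hOm' m hm b hb
    obtain ⟨x, hx0, hxW, hxr⟩ := rad_mem Bm_refl h3 hW
    obtain ⟨hx1, hx2, hx3, hx4'⟩ := Bm_rad hxr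
    have hx4 : x 4 ≠ 0 := by
      intro h4; apply hx0; funext i; fin_cases i <;> assumption
    have he4 : (Pi.single 4 1 : Fin 5 → ℂ) ∈ W := by
      have hx : (Pi.single 4 1 : Fin 5 → ℂ) = (x 4)⁻¹ • x := by
        funext i
        fin_cases i <;> simp [hx1, hx2, hx3, hx4', Pi.single_apply, inv_mul_cancel₀ hx4]
      rw [hx]; exact W.smul_mem _ hxW
    obtain ⟨y, hy0, hyW, hyr⟩ := rad_mem Bm'_refl h3 hW'
    obtain ⟨hy1, hy2, hy3, hy4⟩ := Bm'_rad hyr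
    have hy00 : y 0 ≠ 0 := by
      intro h0; apply hy0; funext i; fin_cases i <;> assumption
    have he0 : (Pi.single 0 1 : Fin 5 → ℂ) ∈ W := by
      have hy : (Pi.single 0 1 : Fin 5 → ℂ) = (y 0)⁻¹ • y := by
        funext i
        fin_cases i <;> simp [hy1, hy2, hy3, hy4, Pi.single_apply, inv_mul_cancel₀ hy00]
      rw [hy]; exact W.smul_mem _ hyW
    have hK : W ≤ Kc := by
      intro v hv
      have hv3 := hOm (Pi.single 0 1) he0 v hv
      have hv2 := hOm' (Pi.single 4 1) he4 v hv
      simp [Om, Om', Pi.single_apply] at hv3 hv2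
      exact ⟨hv2, hv3⟩
    rw [← span_eq_Kc] at hK
    exact Submodule.eq_of_le_of_finrank_eq hK (by rw [h3, finrank_span014])
  · rintro rfl
    refine ⟨finrank_span014, ?_, ?_⟩ <;>
    · intro a ha b hb
      rw [span_eq_Kc, mem_Kc] at ha hb
      obtain ⟨ha2, ha3⟩ := ha
      obtain ⟨hb2, hb3⟩ := hb
      simp [Om, Om', ha2, ha3, hb2, hb3]
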